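/- arXiv:2007.04157 — 2 statements merged into one kernel-verified Lean document; each statement's English description precedes it below -/
import Mathlib

section
/- Let α ≤ 1, β₁, β₂, γ ≥ 0, C > 0, and let μ₁, μ₂ : [0,∞) → [0,∞) be increasing functions. Then there exists a constant K > 0 such that for all t ≥ 0, ∫₀ᵗ (1+t-τ)^{-α} (1+τ)^{-1} (μ₁(C(1+τ)^{-γ}))^{β₁} (μ₂(C(1+τ)^{-γ}))^{β₂} dτ ≤ K (1+t)^{-α} ∫₀ᵗ (1+τ)^{-1} (μ₁(C(1+τ)^{-γ}))^{β₁} (μ₂(C(1+τ)^{-γ}))^{β₂} dτ. -/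
open MeasureTheory Real Set

/-!
Write `P τ = μ₁(C(1+τ)^{-γ})^{β₁} μ₂(C(1+τ)^{-γ})^{β₂}`, a nonnegative antitone function on
`[0, ∞)`. Folding the integral at `t/2` by `τ ↦ t - τ` reduces the claim to a pointwise bound on
`[0, t/2]`. There `1 + t - τ ≥ (1 + t)/2`, and writing `x^{-α} = x^{1-α} x⁻¹` with `1 - α ≥ 0`
gives `(1+t-τ)^{-α} ≤ 2(1+t)^{-α}` and `(1+τ)^{-α}(1+t-τ)⁻¹ ≤ 2(1+t)^{-α}(1+τ)⁻¹`; together with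
`P (t - τ) ≤ P τ` this bounds the folded integrand by `4(1+t)^{-α}(1+τ)⁻¹ P τ`.
-/

lemma AntitoneOn.mul_of_nonneg {α M₀ : Type*} [Mul M₀] [Zero M₀] [Preorder M₀] [Preorder α]
    [PosMulMono M₀] [MulPosMono M₀] {f g : α → M₀} {s : Set α} (hf : AntitoneOn f s)
    (hg : AntitoneOn g s) (hf₀ : ∀ x ∈ s, 0 ≤ f x) (hg₀ : ∀ x ∈ s, 0 ≤ g x) :
    AntitoneOn (f * g) s :=
  fun _ ha _ hb h ↦ mul_le_mul (hf ha hb h) (hg ha hb h) (hg₀ _ hb) (hf₀ _ ha)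

lemma rpow_neg_eq_rpow_one_sub_mul_inv {x : ℝ} (hx : 0 < x) (α : ℝ) :
    x ^ (-α) = x ^ (1 - α) * x⁻¹ := by
  rw [← div_eq_mul_inv, ← rpow_sub_one hx.ne', sub_sub_cancel_left]

lemma rpow_one_sub_mul_inv_le {α a b X : ℝ} (hα : α ≤ 1) (ha : 0 ≤ a) (haX : a ≤ X)
    (hX : 0 < X) (hXb : X ≤ 2 * b) : a ^ (1 - α) * b⁻¹ ≤ 2 * X ^ (-α) := by
  have hb : 0 < b := by linarith
  have hb_inv : b⁻¹ ≤ 2 * X⁻¹ :=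
    calc b⁻¹ ≤ (X / 2)⁻¹ := inv_anti₀ (by positivity) (by linarith)
      _ = 2 * X⁻¹ := by rw [inv_div, div_eq_mul_inv]
  calc a ^ (1 - α) * b⁻¹ ≤ X ^ (1 - α) * (2 * X⁻¹) := by
        gcongr
    _ = 2 * X ^ (-α) := by
        rw [rpow_neg_eq_rpow_one_sub_mul_inv hX]; ring

lemma integral_le_of_add_comp_sub_le {f g : ℝ → ℝ} {t : ℝ} (ht : 0 ≤ t)
    (hf : IntervalIntegrable f volume 0 t) (hg : IntervalIntegrable g volume 0 (t / 2))
    (hfg : ∀ τ ∈ Icc 0 (t / 2), f τ + f (t - τ) ≤ g τ) :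
    ∫ τ in (0:ℝ)..t, f τ ≤ ∫ τ in (0:ℝ)..t / 2, g τ := by
  have hhalf : t / 2 ∈ uIcc 0 t := by rw [uIcc_of_le ht]; constructor <;> linarith
  have hf₁ : IntervalIntegrable f volume 0 (t / 2) := hf.mono_set (uIcc_subset_uIcc_left hhalf)
  have hf₂ : IntervalIntegrable f volume (t / 2) t := hf.mono_set (uIcc_subset_uIcc_right hhalf)
  have hf₂' : IntervalIntegrable (fun τ ↦ f (t - τ)) volume 0 (t / 2) := by
    simpa only [sub_half, sub_self] using (hf₂.comp_sub_left t).symm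
  have hreflect : ∫ τ in (0:ℝ)..t / 2, f (t - τ) = ∫ τ in t / 2..t, f τ := by
    rw [intervalIntegral.integral_comp_sub_left, sub_zero, sub_half]
  rw [← intervalIntegral.integral_add_adjacent_intervals hf₁ hf₂, ← hreflect,
    ← intervalIntegral.integral_add hf₁ hf₂']
  exact intervalIntegral.integral_mono_on (by linarith) (hf₁.add hf₂') hg hfg

lemma rpow_neg_mul_add_reflect_le {α t τ : ℝ} {P : ℝ → ℝ} (hα : α ≤ 1)
    (hP : AntitoneOn P (Ici 0)) (hP₀ : ∀ s ∈ Ici 0, 0 ≤ P s) (hτ : τ ∈ Icc 0 (t / 2)) :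
    (1 + t - τ) ^ (-α) * ((1 + τ)⁻¹ * P τ)
        + (1 + t - (t - τ)) ^ (-α) * ((1 + (t - τ))⁻¹ * P (t - τ))
      ≤ 4 * (1 + t) ^ (-α) * ((1 + τ)⁻¹ * P τ) := by
  obtain ⟨hτ₀, hτt⟩ := hτ
  have hx : 0 < 1 + t - τ := by linarith
  have hy : 0 < 1 + τ := by linarith
  have hX : 0 < 1 + t := by linarith
  have hhead : (1 + t - τ) ^ (-α) ≤ 2 * (1 + t) ^ (-α) := by
    rw [rpow_neg_eq_rpow_one_sub_mul_inv hx]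
    exact rpow_one_sub_mul_inv_le hα hx.le (by linarith) hX (by linarith)
  have htail : (1 + τ) ^ (-α) * (1 + t - τ)⁻¹ ≤ 2 * (1 + t) ^ (-α) * (1 + τ)⁻¹ := by
    rw [rpow_neg_eq_rpow_one_sub_mul_inv hy, mul_right_comm]
    exact mul_le_mul_of_nonneg_right
      (rpow_one_sub_mul_inv_le hα hy.le (by linarith) hX (by linarith)) (by positivity)
  have hPreflect : P (t - τ) ≤ P τ := hP hτ₀ (show 0 ≤ t - τ by linarith) (by linarith)
  have hPτ : 0 ≤ P τ := hP₀ τ hτ₀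
  calc (1 + t - τ) ^ (-α) * ((1 + τ)⁻¹ * P τ)
          + (1 + t - (t - τ)) ^ (-α) * ((1 + (t - τ))⁻¹ * P (t - τ))
        = (1 + t - τ) ^ (-α) * ((1 + τ)⁻¹ * P τ)
          + (1 + τ) ^ (-α) * (1 + t - τ)⁻¹ * P (t - τ) := by
          rw [show 1 + t - (t - τ) = 1 + τ by ring, show 1 + (t - τ) = 1 + t - τ by ring]
          ring
    _ ≤ 2 * (1 + t) ^ (-α) * ((1 + τ)⁻¹ * P τ) + 2 * (1 + t) ^ (-α) * (1 + τ)⁻¹ * P τ := by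
          gcongr
          exact hP₀ _ (show 0 ≤ t - τ by linarith)
    _ = 4 * (1 + t) ^ (-α) * ((1 + τ)⁻¹ * P τ) := by ring

theorem integral_rpow_neg_mul_inv_mul_le {α t : ℝ} {P : ℝ → ℝ} (hα : α ≤ 1)
    (hP : AntitoneOn P (Ici 0)) (hP₀ : ∀ s ∈ Ici 0, 0 ≤ P s) (ht : 0 ≤ t) :
    ∫ τ in (0:ℝ)..t, (1 + t - τ) ^ (-α) * ((1 + τ)⁻¹ * P τ)
      ≤ 4 * (1 + t) ^ (-α) * ∫ τ in (0:ℝ)..t, (1 + τ)⁻¹ * P τ := by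
  have hG : IntervalIntegrable (fun τ ↦ (1 + τ)⁻¹ * P τ) volume 0 t := by
    refine ((hP.mono ?_).intervalIntegrable).continuousOn_mul ?_
    · rw [uIcc_of_le ht]; exact Icc_subset_Ici_self
    · refine ContinuousOn.inv₀ (by fun_prop) fun τ hτ ↦ ?_
      rw [uIcc_of_le ht] at hτ
      linarith [hτ.1]
  have hF : IntervalIntegrable (fun τ ↦ (1 + t - τ) ^ (-α) * ((1 + τ)⁻¹ * P τ)) volume 0 t := by
    refine hG.continuousOn_mul (ContinuousOn.rpow_const (by fun_prop) fun τ hτ ↦ Or.inl ?_)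
    rw [uIcc_of_le ht] at hτ
    linarith [hτ.2]
  have hG₀ : ∀ τ ∈ Ioc 0 t, 0 ≤ (1 + τ)⁻¹ * P τ := fun τ hτ ↦ by
    have := hP₀ τ (le_of_lt hτ.1)
    have : 0 ≤ 1 + τ := by linarith [hτ.1]
    positivity
  calc ∫ τ in (0:ℝ)..t, (1 + t - τ) ^ (-α) * ((1 + τ)⁻¹ * P τ)
        ≤ ∫ τ in (0:ℝ)..t / 2, 4 * (1 + t) ^ (-α) * ((1 + τ)⁻¹ * P τ) :=
          integral_le_of_add_comp_sub_le ht hF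
            ((hG.mono_set (by
              rw [uIcc_of_le ht, uIcc_of_le (by linarith)]
              exact Icc_subset_Icc le_rfl (by linarith))).const_mul _)
            fun τ hτ ↦ rpow_neg_mul_add_reflect_le hα hP hP₀ hτ
    _ = 4 * (1 + t) ^ (-α) * ∫ τ in (0:ℝ)..t / 2, (1 + τ)⁻¹ * P τ :=
          intervalIntegral.integral_const_mul _ _
    _ ≤ 4 * (1 + t) ^ (-α) * ∫ τ in (0:ℝ)..t, (1 + τ)⁻¹ * P τ := by
          gcongr
          exact intervalIntegral.integral_mono_interval le_rfl (by linarith) (by linarith)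
            (ae_restrict_of_forall_mem measurableSet_Ioc hG₀) hG

lemma antitoneOn_comp_rpow_neg {μ : ℝ → ℝ} {β γ C : ℝ} (hμ : Monotone μ) (hμ₀ : ∀ s, 0 ≤ μ s)
    (hβ : 0 ≤ β) (hγ : 0 ≤ γ) (hC : 0 ≤ C) :
    AntitoneOn (fun τ ↦ μ (C * (1 + τ) ^ (-γ)) ^ β) (Ici 0) := fun a ha b _ hab ↦ by
  have ha' : 0 < 1 + a := by linarith [mem_Ici.1 ha]
  have hdecay : C * (1 + b) ^ (-γ) ≤ C * (1 + a) ^ (-γ) :=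
    mul_le_mul_of_nonneg_left (rpow_le_rpow_of_nonpos ha' (by linarith) (by linarith)) hC
  exact rpow_le_rpow (hμ₀ _) (hμ hdecay) hβ

theorem stmt_0 (α β₁ β₂ γ C : ℝ) (hα : α ≤ 1) (hβ₁ : 0 ≤ β₁) (hβ₂ : 0 ≤ β₂)
    (hγ : 0 ≤ γ) (hC : 0 < C) (μ₁ μ₂ : ℝ → ℝ)
    (hμ₁ : Monotone μ₁) (hμ₂ : Monotone μ₂)
    (hμ₁0 : ∀ s, 0 ≤ μ₁ s) (hμ₂0 : ∀ s, 0 ≤ μ₂ s) :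
    ∃ K > (0:ℝ), ∀ t ≥ (0:ℝ),
      (∫ τ in (0:ℝ)..t, (1 + t - τ) ^ (-α) * (1 + τ)⁻¹ *
        (μ₁ (C * (1 + τ) ^ (-γ))) ^ β₁ * (μ₂ (C * (1 + τ) ^ (-γ))) ^ β₂)
      ≤ K * (1 + t) ^ (-α) *
        ∫ τ in (0:ℝ)..t, (1 + τ)⁻¹ *
          (μ₁ (C * (1 + τ) ^ (-γ))) ^ β₁ * (μ₂ (C * (1 + τ) ^ (-γ))) ^ β₂ := by
  have hP := (antitoneOn_comp_rpow_neg hμ₁ hμ₁0 hβ₁ hγ hC.le).mul_of_nonneg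
    (antitoneOn_comp_rpow_neg hμ₂ hμ₂0 hβ₂ hγ hC.le)
    (fun _ _ ↦ rpow_nonneg (hμ₁0 _) _) (fun _ _ ↦ rpow_nonneg (hμ₂0 _) _)
  refine ⟨4, by norm_num, fun t ht ↦ ?_⟩
  simpa only [Pi.mul_apply, mul_assoc] using integral_rpow_neg_mul_inv_mul_le hα hP
    (fun s _ ↦ mul_nonneg (rpow_nonneg (hμ₁0 _) _) (rpow_nonneg (hμ₂0 _) _)) ht
end

section
/- Let p, q > 1, n > 0 with (q+1)/(pq-1) = n/2. Suppose G : [R₀,∞) → (0,∞) is C¹, increasing, and satisfies G'(r) ≥ (C/r) (μ₁(C₀ r^{-n}))^{q/(q+1)} (μ₂(C₀ r^{-n}))^{1/(q+1)} G(r)^{q(p+1)/(q+1)} for all r > R₀, where μ₁, μ₂ are nonnegative measurable and C, C₀ > 0. Then ∫₀^{C₀ R₀^{-n}} (1/s)(μ₁(s))^{q/(q+1)}(μ₂(s))^{1/(q+1)} ds ≤ K (G(R₀))^{-2/n} for some constant K > 0 depending only on C, n, p, q. In particular, if this last integral diverges, no such G exists. -/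
open Real Set MeasureTheory

/-! Substituting `s = C₀ r^(-n)`, so that `ds / s = n dr / r`, turns the integral into
`∫_{R₀}^∞ (n / r) μ₁^(q/(q+1)) μ₂^(1/(q+1)) dr`. Since `q(p+1)/(q+1) = 1 + 2/n`, the differential
inequality bounds this integrand by `(n / C) G' G^(-1-2/n)`, the derivative of the nonpositive
function `-(n² / 2C) G^(-2/n)`, so the integral is at most `(n² / 2C) G(R₀)^(-2/n)`. -/

lemma exponent_eq_one_add_two_div_of_critical {p q n : ℝ} (hn : 0 < n)
    (hcrit : (q + 1) / (p * q - 1) = n / 2) : q * (p + 1) / (q + 1) = 1 + 2 / n := by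
  have hq : q + 1 ≠ 0 := by
    rintro h
    rw [h, zero_div] at hcrit
    linarith
  have hpq : p * q - 1 ≠ 0 := by
    rintro h
    rw [h, div_zero] at hcrit
    linarith
  rw [div_eq_div_iff hpq two_ne_zero] at hcrit
  field_simp
  linear_combination -hcrit

lemma strictAntiOn_const_mul_rpow_neg {c n : ℝ} (hc : 0 < c) (hn : 0 < n) :
    StrictAntiOn (fun r : ℝ => c * r ^ (-n)) (Ioi 0) := fun _ hx _ _ hxy =>
  mul_lt_mul_of_pos_left (rpow_lt_rpow_of_neg hx hxy (neg_lt_zero.2 hn)) hc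

lemma image_const_mul_rpow_neg_Ioi {c n a : ℝ} (hc : 0 < c) (hn : 0 < n) (ha : 0 < a) :
    (fun r => c * r ^ (-n)) '' Ioi a = Ioo 0 (c * a ^ (-n)) := by
  have hanti := strictAntiOn_const_mul_rpow_neg hc hn
  apply Subset.antisymm
  · rintro _ ⟨r, hr, rfl⟩
    exact ⟨by have := rpow_pos_of_pos (ha.trans hr) (-n); positivity,
      hanti ha (ha.trans hr) hr⟩
  · rintro s ⟨hs, hsa⟩
    have hr : 0 < (s / c) ^ (-n⁻¹) := rpow_pos_of_pos (div_pos hs hc) _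
    have hs_eq : c * ((s / c) ^ (-n⁻¹)) ^ (-n) = s := by
      rw [← rpow_mul (div_pos hs hc).le, neg_mul_neg, inv_mul_cancel₀ hn.ne', rpow_one]
      field_simp
    refine ⟨_, ?_, hs_eq⟩
    by_contra! h
    have := hanti.antitoneOn hr ha (not_lt.1 h)
    simp only [hs_eq] at this
    linarith

lemma lintegral_Ioc_eq_lintegral_Ioi_comp_rpow_neg {c n a : ℝ} (hc : 0 < c) (hn : 0 < n)
    (ha : 0 < a) (f : ℝ → ENNReal) :
    ∫⁻ s in Ioc 0 (c * a ^ (-n)), f s =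
      ∫⁻ r in Ioi a, ENNReal.ofReal (n * c * r ^ (-n - 1)) * f (c * r ^ (-n)) := by
  rw [← setLIntegral_congr Ioo_ae_eq_Ioc, ← image_const_mul_rpow_neg_Ioi hc hn ha,
    lintegral_image_eq_lintegral_abs_deriv_mul measurableSet_Ioi
      (f' := fun r => c * (-n * r ^ (-n - 1)))]
  · refine setLIntegral_congr_fun measurableSet_Ioi fun r hr => ?_
    have := rpow_pos_of_pos (ha.trans hr) (-n - 1)
    rw [show c * (-n * r ^ (-n - 1)) = -(n * c * r ^ (-n - 1)) by ring, abs_neg,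
      abs_of_pos (by positivity)]
  · exact fun r hr => ((hasDerivAt_rpow_const
      (Or.inl (ha.trans hr).ne')).const_mul c).hasDerivWithinAt
  · exact (strictAntiOn_const_mul_rpow_neg hc hn).injOn.mono (Ioi_subset_Ioi ha.le)

lemma iUnion_Ioc_add_natCast (a : ℝ) : ⋃ k : ℕ, Ioc a (a + k) = Ioi a := by
  ext x
  simp only [mem_iUnion, mem_Ioc, mem_Ioi]
  refine ⟨fun ⟨_, hk, _⟩ => hk, fun hx => ?_⟩
  obtain ⟨k, hk⟩ := exists_nat_ge (x - a)
  exact ⟨k, hx, by linarith⟩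

lemma lintegral_Ioi_ofReal_deriv_le {Φ F : ℝ → ℝ} {a M : ℝ} (hcont : ContinuousOn Φ (Ici a))
    (hderiv : ∀ x ∈ Ioi a, HasDerivAt Φ (F x) x) (hF : ∀ x ∈ Ioi a, 0 ≤ F x)
    (hM : ∀ x ∈ Ioi a, Φ x ≤ M) :
    ∫⁻ x in Ioi a, ENNReal.ofReal (F x) ≤ ENNReal.ofReal (M - Φ a) := by
  have hmono : Monotone fun k : ℕ => Ioc a (a + k) := fun k l hkl =>
    Ioc_subset_Ioc_right (by gcongr)
  rw [← iUnion_Ioc_add_natCast, setLIntegral_iUnion_of_directed _ hmono.directed_le]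
  refine iSup_le fun k => ?_
  have hak : a ≤ a + k := le_add_of_nonneg_right k.cast_nonneg
  have hcont' := hcont.mono (Icc_subset_Ici_self : Icc a (a + k) ⊆ Ici a)
  have hderiv' : ∀ x ∈ Ioo a (a + k), HasDerivAt Φ (F x) x := fun x hx => hderiv x hx.1
  have hint : IntegrableOn F (Ioc a (a + k)) :=
    intervalIntegral.integrableOn_deriv_of_nonneg hcont' hderiv' fun x hx => hF x hx.1
  rw [← ofReal_integral_eq_lintegral_ofReal hint
    ((ae_restrict_iff' measurableSet_Ioc).2 (ae_of_all _ fun x hx => hF x hx.1)),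
    ← intervalIntegral.integral_of_le hak,
    intervalIntegral.integral_eq_sub_of_hasDerivAt_of_le hak hcont' hderiv'
      ((intervalIntegrable_iff_integrableOn_Ioc_of_le hak).2 hint)]
  rcases hak.eq_or_lt with h | h
  · rw [← h, sub_self, ENNReal.ofReal_zero]
    exact bot_le
  · exact ENNReal.ofReal_le_ofReal (by linarith [hM _ (mem_Ioi.2 h)])

lemma HasDerivAt.neg_half_mul_rpow_neg_two_div {g : ℝ → ℝ} {g' x n : ℝ} (hg : HasDerivAt g g' x)
    (hx : 0 < g x) (hn : n ≠ 0) :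
    HasDerivAt (fun y => -(n / 2) * g y ^ (-2 / n)) (g' * g x ^ (-(1 + 2 / n))) x := by
  refine ((hg.rpow_const (p := -2 / n) (Or.inl hx.ne')).const_mul (-(n / 2))).congr_deriv ?_
  rw [show -2 / n - 1 = -(1 + 2 / n) by ring]
  field_simp

lemma mul_rpow_neg_sub_one_mul_one_div {c n r : ℝ} (hc : 0 < c) (hr : 0 < r) (u : ℝ) :
    n * c * r ^ (-n - 1) * (1 / (c * r ^ (-n)) * u) = n / r * u := by
  have := rpow_pos_of_pos hr (-n)
  rw [sub_eq_add_neg, rpow_add hr, rpow_neg_one]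
  field_simp

lemma div_mul_le_div_mul_rpow_neg_of_le {n C r g g' u : ℝ} (hn : 0 ≤ n) (hC : 0 < C)
    (hg : 0 < g) (hode : C / r * u * g ^ (1 + 2 / n) ≤ g') :
    n / r * u ≤ n / C * (g' * g ^ (-(1 + 2 / n))) := by
  have hpow : g ^ (1 + 2 / n) * g ^ (-(1 + 2 / n)) = 1 := by
    rw [← rpow_add hg, add_neg_cancel, rpow_zero]
  calc n / r * u = n / C * (C / r * u * g ^ (1 + 2 / n) * g ^ (-(1 + 2 / n))) := by
        rw [mul_assoc _ (g ^ _), hpow]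
        field_simp
    _ ≤ n / C * (g' * g ^ (-(1 + 2 / n))) := by gcongr

theorem stmt_13_general (p q n C : ℝ) (hn : 0 < n) (hC : 0 < C)
    (hcrit : (q + 1) / (p * q - 1) = n / 2) :
    ∃ K > (0:ℝ), ∀ (G μ₁ μ₂ : ℝ → ℝ) (C₀ R₀ : ℝ), 0 < C₀ → 0 < R₀ →
      ContDiffOn ℝ 1 G (Ici R₀) → MonotoneOn G (Ici R₀) →
      (∀ r ∈ Ici R₀, 0 < G r) →
      Measurable μ₁ → Measurable μ₂ → (∀ s, 0 ≤ μ₁ s) → (∀ s, 0 ≤ μ₂ s) →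
      (∀ r > R₀, deriv G r ≥
        (C / r) * (μ₁ (C₀ * r ^ (-n))) ^ (q / (q + 1)) *
          (μ₂ (C₀ * r ^ (-n))) ^ (1 / (q + 1)) * (G r) ^ (q * (p + 1) / (q + 1))) →
      (∫⁻ s in Ioc (0:ℝ) (C₀ * R₀ ^ (-n)),
          ENNReal.ofReal ((1 / s) * (μ₁ s) ^ (q / (q + 1)) * (μ₂ s) ^ (1 / (q + 1))))
        ≤ ENNReal.ofReal (K * (G R₀) ^ (-2 / n)) := by
  refine ⟨n / C * (n / 2), by positivity, ?_⟩
  intro G μ₁ μ₂ C₀ R₀ hC₀ hR₀ hG _ hGpos _ _ hμ₁ hμ₂ hode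
  have hGpos' : ∀ r ∈ Ioi R₀, 0 < G r := fun r hr => hGpos r (Ioi_subset_Ici_self hr)
  have hbound : ∀ r ∈ Ioi R₀, n / r * (μ₁ (C₀ * r ^ (-n)) ^ (q / (q + 1)) *
      μ₂ (C₀ * r ^ (-n)) ^ (1 / (q + 1))) ≤ n / C * (deriv G r * G r ^ (-(1 + 2 / n))) :=
    fun r hr => div_mul_le_div_mul_rpow_neg_of_le hn.le hC (hGpos' r hr) <| by
      rw [← exponent_eq_one_add_two_div_of_critical hn hcrit, ← mul_assoc]
      exact hode r hr
  have hGderiv : ∀ r ∈ Ioi R₀, HasDerivAt G (deriv G r) r := fun r hr =>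
    ((hG.differentiableOn one_ne_zero r (Ioi_subset_Ici_self hr)).differentiableAt
      (Ici_mem_nhds hr)).hasDerivAt
  calc _ = ∫⁻ r in Ioi R₀, _ := lintegral_Ioc_eq_lintegral_Ioi_comp_rpow_neg hC₀ hn hR₀ _
    _ ≤ ∫⁻ r in Ioi R₀, ENNReal.ofReal (n / C * (deriv G r * G r ^ (-(1 + 2 / n)))) := by
      refine setLIntegral_mono' measurableSet_Ioi fun r hr => ?_
      have hr0 : 0 < r := hR₀.trans hr
      have hjac : 0 ≤ n * C₀ * r ^ (-n - 1) := by positivity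
      rw [← ENNReal.ofReal_mul hjac, mul_assoc (1 / _),
        mul_rpow_neg_sub_one_mul_one_div hC₀ hr0]
      exact ENNReal.ofReal_le_ofReal (hbound r hr)
    _ ≤ ENNReal.ofReal (0 - n / C * (-(n / 2) * G R₀ ^ (-2 / n))) := by
      refine lintegral_Ioi_ofReal_deriv_le ?_
        (fun r hr => ((hGderiv r hr).neg_half_mul_rpow_neg_two_div (hGpos' r hr)
          hn.ne').const_mul (n / C))
        (fun r hr => le_trans (mul_nonneg (div_nonneg hn.le (hR₀.trans hr).le)
          (mul_nonneg (rpow_nonneg (hμ₁ _) _) (rpow_nonneg (hμ₂ _) _))) (hbound r hr))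
        (fun r hr => ?_)
      · exact continuousOn_const.mul (continuousOn_const.mul
          (hG.continuousOn.rpow_const fun x hx => Or.inl (hGpos x hx).ne'))
      · have := rpow_nonneg (hGpos' r hr).le (-2 / n)
        have : 0 ≤ n / C * (n / 2) := by positivity
        nlinarith
    _ = ENNReal.ofReal (n / C * (n / 2) * G R₀ ^ (-2 / n)) := by ring_nf

theorem stmt_13 (p q n C : ℝ) (hp : 1 < p) (hq : 1 < q) (hn : 0 < n) (hC : 0 < C)
    (hcrit : (q + 1) / (p * q - 1) = n / 2) :
    ∃ K > (0:ℝ), ∀ (G μ₁ μ₂ : ℝ → ℝ) (C₀ R₀ : ℝ), 0 < C₀ → 0 < R₀ →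
      ContDiffOn ℝ 1 G (Ici R₀) → MonotoneOn G (Ici R₀) →
      (∀ r ∈ Ici R₀, 0 < G r) →
      Measurable μ₁ → Measurable μ₂ → (∀ s, 0 ≤ μ₁ s) → (∀ s, 0 ≤ μ₂ s) →
      (∀ r > R₀, deriv G r ≥
        (C / r) * (μ₁ (C₀ * r ^ (-n))) ^ (q / (q + 1)) *
          (μ₂ (C₀ * r ^ (-n))) ^ (1 / (q + 1)) * (G r) ^ (q * (p + 1) / (q + 1))) →
      (∫⁻ s in Ioc (0:ℝ) (C₀ * R₀ ^ (-n)),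
          ENNReal.ofReal ((1 / s) * (μ₁ s) ^ (q / (q + 1)) * (μ₂ s) ^ (1 / (q + 1))))
        ≤ ENNReal.ofReal (K * (G R₀) ^ (-2 / n)) :=
  stmt_13_general p q n C hn hC hcrit
end
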